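/- Let x > 0, let β ≥ 0 and v ∈ ℝ^N be such that y = x + βv > 0 componentwise, and set z = P(y). Then I_A^b(x) − I_A^b(z) ≥ I_A^b(y) − I_A^b(z) − β ∑_{j=1}^N v_j + β ∑_{i=1}^M b_i d_i(v)/d_i(y). -/

import Mathlib

/-!
The terms in `z` cancel. Since `d(y) = d(x) + β d(v)`, the difference `I(x) - I(y)` equals
`∑ bᵢ log (dᵢ(y) / dᵢ(x)) - β ∑ dᵢ(v)`; the bound `log t ≥ 1 - 1/t` turns each logarithm into at
least `β dᵢ(v) / dᵢ(y)`, and unit column sums give `∑ dᵢ(v) = ∑ vⱼ`.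
-/

open Finset Filter Topology

noncomputable def dd {M N : ℕ} (A : Fin M → Fin N → ℝ) (x : Fin N → ℝ) (i : Fin M) : ℝ :=
  ∑ j, A i j * x j

noncomputable def ff {M N : ℕ} (A : Fin M → Fin N → ℝ) (b : Fin M → ℝ) (x : Fin N → ℝ) (j : Fin N) : ℝ :=
  ∑ i, A i j * b i / dd A x i

noncomputable def EMop {M N : ℕ} (A : Fin M → Fin N → ℝ) (b : Fin M → ℝ) (x : Fin N → ℝ) : Fin N → ℝ :=
  fun j => x j * ff A b x j

noncomputable def KL {N : ℕ} (u v : Fin N → ℝ) : ℝ :=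
  (∑ j, u j * Real.log (u j / v j)) - ∑ j, (u j - v j)

noncomputable def IAb {M N : ℕ} (A : Fin M → Fin N → ℝ) (b : Fin M → ℝ) (x : Fin N → ℝ) : ℝ :=
  (∑ i, b i * Real.log (b i / dd A x i)) - ∑ i, (b i - dd A x i)

noncomputable def finSup0 {ι : Type*} (s : Finset ι) (g : ι → ℝ) : ℝ :=
  if h : s.Nonempty then s.sup' h g else 0

noncomputable def finInf0 {ι : Type*} (s : Finset ι) (g : ι → ℝ) : ℝ :=
  if h : s.Nonempty then s.inf' h g else 0

section EM

variable {M N : ℕ} {A : Fin M → Fin N → ℝ} {b : Fin M → ℝ}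

theorem dd_pos (hA : ∀ i j, 0 ≤ A i j) (hrow : ∀ i, ∃ j, 0 < A i j) {x : Fin N → ℝ}
    (hx : ∀ j, 0 < x j) (i : Fin M) : 0 < dd A x i := by
  obtain ⟨j, hj⟩ := hrow i
  exact sum_pos' (fun k _ => mul_nonneg (hA i k) (hx k).le) ⟨j, mem_univ j, mul_pos hj (hx j)⟩

theorem dd_add_mul (x v : Fin N → ℝ) (β : ℝ) (i : Fin M) :
    dd A (fun j => x j + β * v j) i = dd A x i + β * dd A v i := by
  simp only [dd, mul_sum, ← sum_add_distrib]
  exact sum_congr rfl fun j _ => by ring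

theorem sum_dd_of_sum_col_eq_one (hcol : ∀ j, ∑ i, A i j = 1) (v : Fin N → ℝ) :
    ∑ i, dd A v i = ∑ j, v j := by
  simp only [dd]
  rw [sum_comm]
  exact sum_congr rfl fun j _ => by rw [← sum_mul, hcol j, one_mul]

theorem IAb_sub_IAb (hb : ∀ i, b i ≠ 0) {x y : Fin N → ℝ} (hx : ∀ i, dd A x i ≠ 0)
    (hy : ∀ i, dd A y i ≠ 0) :
    IAb A b x - IAb A b y =
      ∑ i, b i * Real.log (dd A y i / dd A x i) - ∑ i, (dd A y i - dd A x i) := by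
  have hlog : ∀ i, b i * Real.log (b i / dd A x i) - b i * Real.log (b i / dd A y i) =
      b i * Real.log (dd A y i / dd A x i) := fun i => by
    rw [Real.log_div (hb i) (hx i), Real.log_div (hb i) (hy i), Real.log_div (hy i) (hx i)]
    ring
  simp only [IAb, ← sum_congr rfl fun i _ => hlog i, sum_sub_distrib]
  ring

theorem mul_one_sub_div_le_mul_log_div {c p q : ℝ} (hc : 0 ≤ c) (hp : 0 < p) (hq : 0 < q) :
    c * (1 - p / q) ≤ c * Real.log (q / p) := by
  have := Real.one_sub_inv_le_log_of_pos (div_pos hq hp)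
  rw [inv_div] at this
  exact mul_le_mul_of_nonneg_left this hc

theorem sum_mul_one_sub_div_le_IAb_sub_IAb (hb : ∀ i, 0 < b i) {x y : Fin N → ℝ}
    (hx : ∀ i, 0 < dd A x i) (hy : ∀ i, 0 < dd A y i) :
    ∑ i, b i * (1 - dd A x i / dd A y i) - ∑ i, (dd A y i - dd A x i) ≤
      IAb A b x - IAb A b y := by
  rw [IAb_sub_IAb (fun i => (hb i).ne') (fun i => (hx i).ne') (fun i => (hy i).ne')]
  gcongr 1
  exact sum_le_sum fun i _ => mul_one_sub_div_le_mul_log_div (hb i).le (hx i) (hy i)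

end EM

theorem stmt_5_general
    (M N : ℕ)
    (A : Fin M → Fin N → ℝ) (b : Fin M → ℝ)
    (hA : ∀ i j, 0 ≤ A i j)
    (hcol : ∀ j, ∑ i, A i j = 1)
    (hrow : ∀ i, ∃ j, 0 < A i j)
    (hb : ∀ i, 0 < b i)
    (x v : Fin N → ℝ) (β : ℝ)
    (hx : ∀ j, 0 < x j)
    (y : Fin N → ℝ) (hy : y = fun j => x j + β * v j)
    (hypos : ∀ j, 0 < y j)
    (z : Fin N → ℝ) :
    IAb A b x - IAb A b z ≥
      IAb A b y - IAb A b z - β * (∑ j, v j) +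
        β * ∑ i, b i * (dd A v i / dd A y i) := by
  have hdx := dd_pos hA hrow hx
  have hdy := dd_pos hA hrow hypos
  have hstep : ∀ i, dd A y i - dd A x i = β * dd A v i := fun i => by
    rw [hy, dd_add_mul]; ring
  have hlog := sum_mul_one_sub_div_le_IAb_sub_IAb hb hdx hdy
  have hfrac : ∑ i, b i * (1 - dd A x i / dd A y i) = β * ∑ i, b i * (dd A v i / dd A y i) := by
    rw [mul_sum]
    refine sum_congr rfl fun i _ => ?_
    rw [one_sub_div (hdy i).ne', hstep i]
    ring
  have hmass : ∑ i, (dd A y i - dd A x i) = β * ∑ j, v j := by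
    simp only [hstep, ← mul_sum, sum_dd_of_sum_col_eq_one hcol]
  linarith

theorem stmt_5
    (M N : ℕ) (hM : 0 < M) (hN : 0 < N)
    (A : Fin M → Fin N → ℝ) (b : Fin M → ℝ)
    (hA : ∀ i j, 0 ≤ A i j)
    (hcol : ∀ j, ∑ i, A i j = 1)
    (hrow : ∀ i, ∃ j, 0 < A i j)
    (hb : ∀ i, 0 < b i)
    (x v : Fin N → ℝ) (β : ℝ)
    (hx : ∀ j, 0 < x j) (hβ : 0 ≤ β)
    (y : Fin N → ℝ) (hy : y = fun j => x j + β * v j)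
    (hypos : ∀ j, 0 < y j)
    (z : Fin N → ℝ) (hz : z = EMop A b y) :
    IAb A b x - IAb A b z ≥
      IAb A b y - IAb A b z - β * (∑ j, v j) +
        β * ∑ i, b i * (dd A v i / dd A y i) :=
  stmt_5_general M N A b hA hcol hrow hb x v β hx y hy hypos z
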